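/- arXiv:1407.5268 — 2 statements merged into one kernel-verified Lean document; each statement's English description precedes it below -/
import Mathlib

section
/- Let G be a signed graph and suppose 𝒞 = {C₁, …, C_r} is a set of signed circuits such that every edge of G belongs to some C_i. Then, for any fixed bidirected orientation of G with each C_i consistently directed up to edge reversals, the function ψ = Σ_{i=1}^{r} 2^{2i−1} χ_{C_i} is a nowhere-zero integer flow on G. -/
/-! ## Signed graphs, bidirected orientations, flows, circuits -/

/-- A signed graph on vertex type `V` and edge type `E`: each edge has two
half-edges (indexed by `Bool`), each with an endpoint, and a sign
(`true` = positive, `false` = negative). -/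
structure SignedGraph (V E : Type) where
  ends : E → Bool → V
  sign : E → Bool

variable {V E : Type}

/-- A bidirected orientation: `dir e i = true` means the half-edge `i` of `e`
is directed *toward* its endpoint.  Positive edges have one half in, one half
out; negative edges have both halves directed the same way. -/
structure SOrientation (G : SignedGraph V E) where
  dir : E → Bool → Bool
  compat : ∀ e, G.sign e = xor (dir e false) (dir e true)

/-- Reverse the orientation on the set of edges where `s e = true`. -/
def SOrientation.reorient {G : SignedGraph V E} (O : SOrientation G) (s : E → Bool) :
    SOrientation G where
  dir := fun e i => xor (s e) (O.dir e i)
  compat := by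
    intro e
    have h := O.compat e
    cases hs : s e <;> simp [hs, h]

/-- Kirchhoff's law: at every vertex the sum of the values on incoming
half-edges equals the sum on outgoing half-edges. -/
def IsFlow [Fintype E] [DecidableEq V] {G : SignedGraph V E} {A : Type} [AddCommGroup A]
    (O : SOrientation G) (f : E → A) : Prop :=
  ∀ v : V,
    (∑ e : E, ∑ i : Bool, if G.ends e i = v ∧ O.dir e i = true then f e else 0)
      = ∑ e : E, ∑ i : Bool, if G.ends e i = v ∧ O.dir e i = false then f e else 0

/-- `G` admits a nowhere-zero integer flow (is flow-admissible). -/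
def HasNZFlow [Fintype E] [DecidableEq V] (G : SignedGraph V E) : Prop :=
  ∃ (O : SOrientation G) (φ : E → ℤ), IsFlow O φ ∧ ∀ e, φ e ≠ 0

/-- `G` admits a nowhere-zero `k`-flow: an integer flow with values in
`{±1, …, ±(k-1)}`. -/
def HasNZkFlow [Fintype E] [DecidableEq V] (G : SignedGraph V E) (k : ℕ) : Prop :=
  ∃ (O : SOrientation G) (φ : E → ℤ), IsFlow O φ ∧ ∀ e, φ e ≠ 0 ∧ (φ e).natAbs ≤ k - 1

/-- A circuit of length `n+1` in `G`: pairwise distinct vertices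
`vtx 0, …, vtx n` and pairwise distinct edges, where edge `i` joins `vtx i`
(via its half `half i`) to `vtx (i+1)` (via the other half); indices cyclic. -/
structure Circuit (G : SignedGraph V E) where
  n : ℕ
  vtx : Fin (n + 1) → V
  edge : Fin (n + 1) → E
  half : Fin (n + 1) → Bool
  vtx_inj : Function.Injective vtx
  edge_inj : Function.Injective edge
  ends_src : ∀ i, G.ends (edge i) (half i) = vtx i
  ends_tgt : ∀ i, G.ends (edge i) (!(half i)) = vtx (i + 1)

/-- Number of edges of a circuit. -/
def Circuit.length {G : SignedGraph V E} (C : Circuit G) : ℕ := C.n + 1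

/-- A circuit is balanced if it has an even number of negative edges. -/
def Circuit.Balanced {G : SignedGraph V E} (C : Circuit G) : Prop :=
  Even (Finset.univ.filter (fun i => G.sign (C.edge i) = false)).card

/-- Consistency of a (raw) bidirection `d` at the vertex `vtx (i+1)` of a
circuit: exactly one of the two half-edges of the circuit at that vertex is
directed toward it. -/
def Circuit.ConsistentAt {G : SignedGraph V E} (C : Circuit G)
    (d : E → Bool → Bool) (i : Fin (C.n + 1)) : Prop :=
  d (C.edge i) (!(C.half i)) ≠ d (C.edge (i + 1)) (C.half (i + 1))

/-- A path of length `m` (possibly trivial, `m = 0`) in `G`. -/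
structure GPath (G : SignedGraph V E) where
  m : ℕ
  vtx : Fin (m + 1) → V
  edge : Fin m → E
  half : Fin m → Bool
  vtx_inj : Function.Injective vtx
  edge_inj : Function.Injective edge
  ends_src : ∀ i, G.ends (edge i) (half i) = vtx i.castSucc
  ends_tgt : ∀ i, G.ends (edge i) (!(half i)) = vtx i.succ

/-- A path is consistently directed (w.r.t. a raw bidirection `d`) if it is
consistent at every internal vertex. -/
def GPath.ConsDir {G : SignedGraph V E} (P : GPath G) (d : E → Bool → Bool) : Prop :=
  ∀ a b : Fin P.m, (a : ℕ) + 1 = (b : ℕ) →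
    d (P.edge a) (!(P.half a)) ≠ d (P.edge b) (P.half b)

/-- A trail of length `m`: distinct edges, vertices may repeat. -/
structure Trail (G : SignedGraph V E) where
  m : ℕ
  vtx : Fin (m + 1) → V
  edge : Fin m → E
  half : Fin m → Bool
  edge_inj : Function.Injective edge
  ends_src : ∀ i, G.ends (edge i) (half i) = vtx i.castSucc
  ends_tgt : ∀ i, G.ends (edge i) (!(half i)) = vtx i.succ

/-- A signed circuit: either a balanced circuit, or an unbalanced bicircuit,
i.e. two unbalanced circuits joined by a (possibly trivial) connecting path
which meets the circuits only at its ends; if the path is trivial the two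
circuits share exactly one vertex, otherwise they are vertex-disjoint. -/
inductive SignedCircuit (G : SignedGraph V E) where
  | balanced (C : Circuit G) (hb : C.Balanced)
  | bicircuit (C₁ C₂ : Circuit G) (P : GPath G)
      (h₁ : ¬ C₁.Balanced) (h₂ : ¬ C₂.Balanced)
      (hstart : P.vtx 0 ∈ Set.range C₁.vtx)
      (hend : P.vtx (Fin.last P.m) ∈ Set.range C₂.vtx)
      (hmeet : ∀ x, x ∈ Set.range C₁.vtx → x ∈ Set.range C₂.vtx →
        P.m = 0 ∧ x = P.vtx 0)
      (hpathint : ∀ k : Fin (P.m + 1), k ≠ 0 → k ≠ Fin.last P.m →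
        P.vtx k ∉ Set.range C₁.vtx ∧ P.vtx k ∉ Set.range C₂.vtx)
      (hedisj : ∀ a b, C₁.edge a ≠ C₂.edge b)
      (hpe₁ : ∀ a b, P.edge a ≠ C₁.edge b)
      (hpe₂ : ∀ a b, P.edge a ≠ C₂.edge b)

namespace SignedCircuit

variable {G : SignedGraph V E}

/-- The edge set of a signed circuit. -/
def edges : SignedCircuit G → Set E
  | balanced C _ => Set.range C.edge
  | bicircuit C₁ C₂ P _ _ _ _ _ _ _ _ _ =>
      Set.range C₁.edge ∪ Set.range C₂.edge ∪ Set.range P.edge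

/-- The vertex set of a signed circuit. -/
def vertices : SignedCircuit G → Set V
  | balanced C _ => Set.range C.vtx
  | bicircuit C₁ C₂ P _ _ _ _ _ _ _ _ _ =>
      Set.range C₁.vtx ∪ Set.range C₂.vtx ∪ Set.range P.vtx

/-- The number of edges (total length) of a signed circuit. -/
def length : SignedCircuit G → ℕ
  | balanced C _ => C.length
  | bicircuit C₁ C₂ P _ _ _ _ _ _ _ _ _ => C₁.length + C₂.length + P.m

/-- Whether a signed circuit is an unbalanced bicircuit. -/
def IsBicircuit : SignedCircuit G → Prop
  | balanced _ _ => False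
  | bicircuit _ _ _ _ _ _ _ _ _ _ _ _ => True

/-- The length of the connecting path (`0` for a balanced circuit). -/
def pathLength : SignedCircuit G → ℕ
  | balanced _ _ => 0
  | bicircuit _ _ P _ _ _ _ _ _ _ _ _ => P.m

open Classical in
/-- The characteristic flow of a signed circuit: `1` on a balanced circuit;
`1` on the connecting path and `1/2` on the two circuits of an unbalanced
bicircuit; `0` elsewhere. -/
noncomputable def chi : SignedCircuit G → E → ℚ
  | balanced C _ => fun e => if e ∈ Set.range C.edge then 1 else 0
  | bicircuit C₁ C₂ P _ _ _ _ _ _ _ _ _ => fun e =>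
      if e ∈ Set.range P.edge then 1
      else if e ∈ Set.range C₁.edge ∪ Set.range C₂.edge then 1/2 else 0

/-- A signed circuit is consistently directed w.r.t. the raw bidirection `d`
if every pair of adjacent edges in it is consistently directed, except at the
faulty vertices: a balanced circuit is consistent everywhere; in an unbalanced
bicircuit each constituent circuit fails to be consistent exactly at the
end-vertex of the connecting path lying on it, while the path itself, and the
junctions of the path (resp. of the other circuit, if the path is trivial)
with the circuits, are consistent. -/
def ConsistentlyDirected (d : E → Bool → Bool) : SignedCircuit G → Prop
  | balanced C _ => ∀ i, C.ConsistentAt d i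
  | bicircuit C₁ C₂ P _ _ _ _ _ _ _ _ _ =>
      (∀ i, C₁.vtx (i + 1) ≠ P.vtx 0 → C₁.ConsistentAt d i) ∧
      (∀ i, C₁.vtx (i + 1) = P.vtx 0 → ¬ C₁.ConsistentAt d i) ∧
      (∀ i, C₂.vtx (i + 1) ≠ P.vtx (Fin.last P.m) → C₂.ConsistentAt d i) ∧
      (∀ i, C₂.vtx (i + 1) = P.vtx (Fin.last P.m) → ¬ C₂.ConsistentAt d i) ∧
      P.ConsDir d ∧
      (∀ k : Fin P.m, (k : ℕ) = 0 → ∀ j, C₁.vtx (j + 1) = P.vtx 0 →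
        d (P.edge k) (P.half k) ≠ d (C₁.edge j) (!(C₁.half j))) ∧
      (∀ k : Fin P.m, (k : ℕ) + 1 = P.m → ∀ j, C₂.vtx (j + 1) = P.vtx (Fin.last P.m) →
        d (P.edge k) (!(P.half k)) ≠ d (C₂.edge j) (!(C₂.half j))) ∧
      (P.m = 0 → ∀ j₁ j₂, C₁.vtx (j₁ + 1) = P.vtx 0 → C₂.vtx (j₂ + 1) = P.vtx 0 →
        d (C₁.edge j₁) (!(C₁.half j₁)) ≠ d (C₂.edge j₂) (!(C₂.half j₂)))

end SignedCircuit

/-- Switching a signed graph at a vertex `v`: the signs of all non-loop edges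
incident with `v` are negated (endpoints are unchanged). -/
def SignedGraph.switch [DecidableEq V] (G : SignedGraph V E) (v : V) : SignedGraph V E where
  ends := G.ends
  sign := fun e =>
    if (G.ends e false = v ∨ G.ends e true = v) ∧ G.ends e false ≠ G.ends e true
    then !(G.sign e) else G.sign e

/-- A circuit of `G` is also a circuit of the switched graph. -/
def Circuit.ofSwitch [DecidableEq V] {G : SignedGraph V E} (v : V) (C : Circuit G) :
    Circuit (G.switch v) :=
  ⟨C.n, C.vtx, C.edge, C.half, C.vtx_inj, C.edge_inj, C.ends_src, C.ends_tgt⟩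
namespace NZAux

open Finset

variable {V E : Type}

noncomputable def δ (b : Bool) : ℚ := if b then 1 else -1

lemma δ_add_eq_zero {a b : Bool} (h : a ≠ b) : δ a + δ b = 0 := by
  cases a <;> cases b <;> simp_all [δ]

lemma δ_ne (b : Bool) : δ b ≠ 0 := by cases b <;> simp [δ]

lemma isFlow_iff [Fintype E] [DecidableEq V] {G : SignedGraph V E} (O : SOrientation G)
    (f : E → ℚ) :
    IsFlow O f ↔ ∀ v : V, (∑ e : E, ∑ i : Bool,
      if G.ends e i = v then δ (O.dir e i) * f e else 0) = 0 := by
  unfold IsFlow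
  refine forall_congr' fun v => ?_
  rw [← sub_eq_zero, ← Finset.sum_sub_distrib]
  have key : ∀ e : E, ((∑ i : Bool, if G.ends e i = v ∧ O.dir e i = true then f e else 0)
      - ∑ i : Bool, if G.ends e i = v ∧ O.dir e i = false then f e else 0)
      = ∑ i : Bool, if G.ends e i = v then δ (O.dir e i) * f e else 0 := by
    intro e
    rw [← Finset.sum_sub_distrib]
    refine Finset.sum_congr rfl fun i _ => ?_
    by_cases hv : G.ends e i = v <;> cases hd : O.dir e i <;>
      simp [hv, hd, δ, neg_one_mul]
  rw [Finset.sum_congr rfl fun e _ => key e]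

variable {G : SignedGraph V E}

/-- the sum of signed contributions of the edges of a circuit at a vertex `v`,
each edge carrying the value `c`. -/
noncomputable def cirSum [DecidableEq V] (C : Circuit G) (d : E → Bool → Bool) (c : ℚ)
    (v : V) : ℚ :=
  ∑ j : Fin (C.n + 1), ∑ i : Bool,
    if G.ends (C.edge j) i = v then δ (d (C.edge j) i) * c else 0

/-- evaluation of the two-half sum on a circuit edge -/
lemma circuit_edge_sum [DecidableEq V] (C : Circuit G) (d : E → Bool → Bool) (c : ℚ) (v : V)
    (j : Fin (C.n + 1)) :
    (∑ i : Bool, if G.ends (C.edge j) i = v then δ (d (C.edge j) i) * c else 0)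
      = (if C.vtx j = v then δ (d (C.edge j) (C.half j)) * c else 0)
        + (if C.vtx (j + 1) = v then δ (d (C.edge j) (!(C.half j))) * c else 0) := by
  have h1 := C.ends_src j
  have h2 := C.ends_tgt j
  cases h : C.half j with
  | false =>
      rw [h] at h1 h2; simp only [Bool.not_false] at h2
      simp [Fintype.sum_bool, h1, h2, h, add_comm]
  | true =>
      rw [h] at h1 h2; simp only [Bool.not_true] at h2
      simp [Fintype.sum_bool, h1, h2, h]

lemma cir_eval [DecidableEq V] (C : Circuit G) (d : E → Bool → Bool) (c : ℚ) (v : V) :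
    cirSum C d c v
      = ∑ j : Fin (C.n + 1), (if C.vtx j = v then
          (δ (d (C.edge j) (C.half j)) + δ (d (C.edge (j - 1)) (!(C.half (j - 1))))) * c
          else 0) := by
  have hshift : (∑ j : Fin (C.n + 1),
      (if C.vtx (j + 1) = v then δ (d (C.edge j) (!(C.half j))) * c else 0))
      = ∑ j : Fin (C.n + 1),
      (if C.vtx j = v then δ (d (C.edge (j - 1)) (!(C.half (j - 1)))) * c else 0) := by
    apply Fintype.sum_equiv (Equiv.addRight (1 : Fin (C.n + 1)))
    intro j
    simp [Equiv.addRight, add_sub_cancel_right]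
  calc cirSum C d c v
      = ∑ j : Fin (C.n + 1), ((if C.vtx j = v then δ (d (C.edge j) (C.half j)) * c else 0)
        + (if C.vtx (j + 1) = v then δ (d (C.edge j) (!(C.half j))) * c else 0)) := by
        exact Finset.sum_congr rfl fun j _ => circuit_edge_sum C d c v j
    _ = (∑ j : Fin (C.n + 1), (if C.vtx j = v then δ (d (C.edge j) (C.half j)) * c else 0))
        + ∑ j : Fin (C.n + 1),
          (if C.vtx (j + 1) = v then δ (d (C.edge j) (!(C.half j))) * c else 0) := by
        rw [Finset.sum_add_distrib]
    _ = _ := by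
        rw [hshift, ← Finset.sum_add_distrib]
        refine Finset.sum_congr rfl fun j _ => ?_
        split_ifs <;> ring

lemma cir_eval_not_mem [DecidableEq V] (C : Circuit G) (d : E → Bool → Bool) (c : ℚ) (v : V)
    (hv : v ∉ Set.range C.vtx) : cirSum C d c v = 0 := by
  rw [cir_eval]
  apply Finset.sum_eq_zero
  intro j _
  have : C.vtx j ≠ v := fun h => hv ⟨j, h⟩
  simp [this]

lemma cir_eval_mem [DecidableEq V] (C : Circuit G) (d : E → Bool → Bool) (c : ℚ)
    (k : Fin (C.n + 1)) :
    cirSum C d c (C.vtx k)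
      = (δ (d (C.edge k) (C.half k)) + δ (d (C.edge (k - 1)) (!(C.half (k - 1))))) * c := by
  rw [cir_eval]
  rw [Finset.sum_eq_single k]
  · simp
  · intro j _ hj
    have : C.vtx j ≠ C.vtx k := fun h => hj (C.vtx_inj h)
    simp [this]
  · simp

lemma cirSum_consistent [DecidableEq V] (C : Circuit G) (d : E → Bool → Bool) (c : ℚ)
    (k : Fin (C.n + 1)) (h : C.ConsistentAt d (k - 1)) : cirSum C d c (C.vtx k) = 0 := by
  rw [cir_eval_mem]
  have h' : d (C.edge (k - 1)) (!(C.half (k - 1))) ≠ d (C.edge k) (C.half k) := by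
    unfold Circuit.ConsistentAt at h
    rwa [sub_add_cancel] at h
  rw [add_comm, δ_add_eq_zero h', zero_mul]

lemma not_consistent_eq [DecidableEq V] (C : Circuit G) (d : E → Bool → Bool)
    (k : Fin (C.n + 1)) (h : ¬ C.ConsistentAt d (k - 1)) :
    d (C.edge (k - 1)) (!(C.half (k - 1))) = d (C.edge k) (C.half k) := by
  by_contra hne
  apply h
  unfold Circuit.ConsistentAt
  rwa [sub_add_cancel]

lemma cirSum_of_eq [DecidableEq V] (C : Circuit G) (d : E → Bool → Bool) (c : ℚ)
    (k : Fin (C.n + 1))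
    (h : d (C.edge (k - 1)) (!(C.half (k - 1))) = d (C.edge k) (C.half k)) :
    cirSum C d c (C.vtx k) = 2 * δ (d (C.edge (k - 1)) (!(C.half (k - 1)))) * c := by
  rw [cir_eval_mem, h]
  ring

lemma fin_sum_ite {m t : ℕ} (h : t < m) (A : Fin m → ℚ) :
    (∑ k : Fin m, if (k : ℕ) = t then A k else 0) = A ⟨t, h⟩ := by
  rw [Finset.sum_eq_single ⟨t, h⟩]
  · simp
  · intro j _ hj
    have : (j : ℕ) ≠ t := fun hh => hj (Fin.ext hh)
    simp [this]
  · simp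

/-- the path sum at a vertex `v` -/
noncomputable def pathSum [DecidableEq V] (P : GPath G) (d : E → Bool → Bool) (v : V) : ℚ :=
  ∑ k : Fin P.m, ∑ i : Bool, if G.ends (P.edge k) i = v then δ (d (P.edge k) i) else 0

lemma path_edge_sum [DecidableEq V] (P : GPath G) (d : E → Bool → Bool) (v : V) (k : Fin P.m) :
    (∑ i : Bool, if G.ends (P.edge k) i = v then δ (d (P.edge k) i) else 0)
      = (if P.vtx k.castSucc = v then δ (d (P.edge k) (P.half k)) else 0)
        + (if P.vtx k.succ = v then δ (d (P.edge k) (!(P.half k))) else 0) := by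
  have h1 := P.ends_src k
  have h2 := P.ends_tgt k
  cases h : P.half k with
  | false =>
      rw [h] at h1 h2; simp only [Bool.not_false] at h2
      simp [Fintype.sum_bool, h1, h2, h, add_comm]
  | true =>
      rw [h] at h1 h2; simp only [Bool.not_true] at h2
      simp [Fintype.sum_bool, h1, h2, h]

lemma pathSum_not_mem [DecidableEq V] (P : GPath G) (d : E → Bool → Bool) (v : V)
    (hv : v ∉ Set.range P.vtx) : pathSum P d v = 0 := by
  unfold pathSum
  apply Finset.sum_eq_zero
  intro k _
  rw [path_edge_sum]
  have h1 : P.vtx k.castSucc ≠ v := fun h => hv ⟨_, h⟩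
  have h2 : P.vtx k.succ ≠ v := fun h => hv ⟨_, h⟩
  simp [h1, h2]

lemma pathSum_trivial [DecidableEq V] (P : GPath G) (d : E → Bool → Bool) (v : V)
    (hm : P.m = 0) : pathSum P d v = 0 := by
  unfold pathSum
  apply Finset.sum_eq_zero
  intro k _
  exact absurd k.isLt (by omega)

lemma pathSum_eval [DecidableEq V] (P : GPath G) (d : E → Bool → Bool) (t : Fin (P.m + 1)) :
    pathSum P d (P.vtx t)
      = (∑ k : Fin P.m, if (k : ℕ) = (t : ℕ) then δ (d (P.edge k) (P.half k)) else 0)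
        + (∑ k : Fin P.m,
            if (k : ℕ) + 1 = (t : ℕ) then δ (d (P.edge k) (!(P.half k))) else 0) := by
  unfold pathSum
  rw [Finset.sum_congr rfl fun k _ => path_edge_sum P d (P.vtx t) k, Finset.sum_add_distrib]
  congr 1
  · refine Finset.sum_congr rfl fun k _ => if_congr ?_ rfl rfl
    constructor
    · intro h; simpa using congrArg Fin.val (P.vtx_inj h)
    · intro h; exact congrArg P.vtx (Fin.ext (by simpa using h))
  · refine Finset.sum_congr rfl fun k _ => if_congr ?_ rfl rfl
    constructor
    · intro h; simpa using congrArg Fin.val (P.vtx_inj h)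
    · intro h; exact congrArg P.vtx (Fin.ext (by simpa using h))

lemma pathSum_zero [DecidableEq V] (P : GPath G) (d : E → Bool → Bool) (hm : 0 < P.m) :
    pathSum P d (P.vtx 0) = δ (d (P.edge ⟨0, hm⟩) (P.half ⟨0, hm⟩)) := by
  rw [pathSum_eval]
  have h0 : ((0 : Fin (P.m + 1)) : ℕ) = 0 := rfl
  rw [h0]
  rw [fin_sum_ite hm]
  have : (∑ k : Fin P.m, if (k : ℕ) + 1 = 0 then δ (d (P.edge k) (!(P.half k))) else 0)
      = 0 := by
    apply Finset.sum_eq_zero; intro k _; simp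
  rw [this, add_zero]

lemma pathSum_last [DecidableEq V] (P : GPath G) (d : E → Bool → Bool) (hm : 0 < P.m) :
    pathSum P d (P.vtx (Fin.last P.m))
      = δ (d (P.edge ⟨P.m - 1, by omega⟩) (!(P.half ⟨P.m - 1, by omega⟩))) := by
  rw [pathSum_eval]
  have hlast : ((Fin.last P.m : Fin (P.m + 1)) : ℕ) = P.m := rfl
  rw [hlast]
  have h1 : (∑ k : Fin P.m, if (k : ℕ) = P.m then δ (d (P.edge k) (P.half k)) else 0)
      = 0 := by
    apply Finset.sum_eq_zero; intro k _
    have : (k : ℕ) ≠ P.m := by omega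
    simp [this]
  rw [h1, zero_add]
  have h2 : ∀ k : Fin P.m, ((k : ℕ) + 1 = P.m) = ((k : ℕ) = P.m - 1) := by
    intro k; apply propext; omega
  rw [Finset.sum_congr rfl fun k _ => if_congr (by rw [h2]) rfl rfl]
  exact fin_sum_ite (by omega) _

lemma pathSum_mid [DecidableEq V] (P : GPath G) (d : E → Bool → Bool)
    (hcd : P.ConsDir d) (t : Fin (P.m + 1)) (h0 : t ≠ 0) (hl : t ≠ Fin.last P.m) :
    pathSum P d (P.vtx t) = 0 := by
  have ht0 : 0 < (t : ℕ) := by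
    rcases Nat.eq_zero_or_pos (t : ℕ) with h | h
    · exact absurd (Fin.ext h) h0
    · exact h
  have htm : (t : ℕ) < P.m := by
    have : (t : ℕ) ≠ P.m := fun h => hl (Fin.ext h)
    omega
  rw [pathSum_eval]
  rw [fin_sum_ite htm]
  have h2 : ∀ k : Fin P.m, ((k : ℕ) + 1 = (t : ℕ)) = ((k : ℕ) = (t : ℕ) - 1) := by
    intro k; apply propext; omega
  rw [Finset.sum_congr rfl fun k _ => if_congr (by rw [h2]) rfl rfl]
  rw [fin_sum_ite (by omega : (t : ℕ) - 1 < P.m)]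
  have hcons := hcd ⟨(t : ℕ) - 1, by omega⟩ ⟨(t : ℕ), htm⟩ (by simp; omega)
  rw [add_comm]
  exact δ_add_eq_zero hcons

lemma bi_flow [DecidableEq V] (C₁ C₂ : Circuit G) (P : GPath G) (d : E → Bool → Bool)
    (hstart : P.vtx 0 ∈ Set.range C₁.vtx)
    (hend : P.vtx (Fin.last P.m) ∈ Set.range C₂.vtx)
    (hmeet : ∀ x, x ∈ Set.range C₁.vtx → x ∈ Set.range C₂.vtx → P.m = 0 ∧ x = P.vtx 0)
    (hpathint : ∀ k : Fin (P.m + 1), k ≠ 0 → k ≠ Fin.last P.m →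
        P.vtx k ∉ Set.range C₁.vtx ∧ P.vtx k ∉ Set.range C₂.vtx)
    (hc1 : ∀ i, C₁.vtx (i + 1) ≠ P.vtx 0 → C₁.ConsistentAt d i)
    (hc1' : ∀ i, C₁.vtx (i + 1) = P.vtx 0 → ¬ C₁.ConsistentAt d i)
    (hc2 : ∀ i, C₂.vtx (i + 1) ≠ P.vtx (Fin.last P.m) → C₂.ConsistentAt d i)
    (hc2' : ∀ i, C₂.vtx (i + 1) = P.vtx (Fin.last P.m) → ¬ C₂.ConsistentAt d i)
    (hP : P.ConsDir d)
    (hj1 : ∀ k : Fin P.m, (k : ℕ) = 0 → ∀ j, C₁.vtx (j + 1) = P.vtx 0 →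
        d (P.edge k) (P.half k) ≠ d (C₁.edge j) (!(C₁.half j)))
    (hj2 : ∀ k : Fin P.m, (k : ℕ) + 1 = P.m → ∀ j, C₂.vtx (j + 1) = P.vtx (Fin.last P.m) →
        d (P.edge k) (!(P.half k)) ≠ d (C₂.edge j) (!(C₂.half j)))
    (hjj : P.m = 0 → ∀ j₁ j₂, C₁.vtx (j₁ + 1) = P.vtx 0 → C₂.vtx (j₂ + 1) = P.vtx 0 →
        d (C₁.edge j₁) (!(C₁.half j₁)) ≠ d (C₂.edge j₂) (!(C₂.half j₂)))
    (v : V) :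
    cirSum C₁ d (1/2) v + cirSum C₂ d (1/2) v + pathSum P d v = 0 := by
  by_cases hv1 : v ∈ Set.range C₁.vtx
  · obtain ⟨k, hk⟩ := hv1
    subst hk
    by_cases hq : C₁.vtx k = P.vtx 0
    · have hb1eq := not_consistent_eq C₁ d k (hc1' (k - 1) (by rwa [sub_add_cancel]))
      have hT1 : cirSum C₁ d (1/2) (C₁.vtx k)
          = δ (d (C₁.edge (k - 1)) (!(C₁.half (k - 1)))) := by
        rw [cirSum_of_eq C₁ d _ k hb1eq]; ring
      by_cases hm : P.m = 0
      · have hlast0 : Fin.last P.m = (0 : Fin (P.m + 1)) := Fin.ext (by simp [hm])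
        rw [hlast0] at hend
        have hv2 : C₁.vtx k ∈ Set.range C₂.vtx := by rw [hq]; exact hend
        obtain ⟨k₂, hk₂⟩ := hv2
        have hq₂ : C₂.vtx k₂ = P.vtx 0 := by rw [hk₂, hq]
        have hb2eq := not_consistent_eq C₂ d k₂ (hc2' (k₂ - 1)
          (by rw [sub_add_cancel, hq₂, hlast0]))
        have hT2 : cirSum C₂ d (1/2) (C₁.vtx k)
            = δ (d (C₂.edge (k₂ - 1)) (!(C₂.half (k₂ - 1)))) := by
          rw [← hk₂, cirSum_of_eq C₂ d _ k₂ hb2eq]; ring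
        have hTP := pathSum_trivial P d (C₁.vtx k) hm
        have hne := hjj hm (k - 1) (k₂ - 1) (by rwa [sub_add_cancel])
          (by rw [sub_add_cancel]; exact hq₂)
        rw [hT1, hT2, hTP]
        have := δ_add_eq_zero hne
        linarith
      · have hm' : 0 < P.m := Nat.pos_of_ne_zero hm
        have hv2 : C₁.vtx k ∉ Set.range C₂.vtx := by
          intro hmem
          exact hm (hmeet _ ⟨k, rfl⟩ hmem).1
        have hT2 := cir_eval_not_mem C₂ d (1/2) _ hv2
        have hTP : pathSum P d (C₁.vtx k)
            = δ (d (P.edge ⟨0, hm'⟩) (P.half ⟨0, hm'⟩)) := by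
          rw [hq]; exact pathSum_zero P d hm'
        have hne := hj1 ⟨0, hm'⟩ rfl (k - 1) (by rwa [sub_add_cancel])
        rw [hT1, hT2, hTP]
        have := δ_add_eq_zero hne
        linarith
    · have hT1 := cirSum_consistent C₁ d (1/2) k
        (hc1 (k - 1) (by rw [sub_add_cancel]; exact hq))
      have hv2 : C₁.vtx k ∉ Set.range C₂.vtx := by
        intro hmem
        exact hq (hmeet _ ⟨k, rfl⟩ hmem).2
      have hT2 := cir_eval_not_mem C₂ d (1/2) _ hv2
      have hvP : C₁.vtx k ∉ Set.range P.vtx := by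
        rintro ⟨t, ht⟩
        by_cases h0 : t = 0
        · exact hq (by rw [← ht, h0])
        by_cases hl : t = Fin.last P.m
        · exact hv2 (by rw [← ht, hl]; exact hend)
        · exact (hpathint t h0 hl).1 ⟨k, ht.symm⟩
      have hTP := pathSum_not_mem P d _ hvP
      rw [hT1, hT2, hTP]; ring
  · have hT1 := cir_eval_not_mem C₁ d (1/2) v hv1
    by_cases hv2 : v ∈ Set.range C₂.vtx
    · obtain ⟨k, hk⟩ := hv2
      subst hk
      by_cases hq : C₂.vtx k = P.vtx (Fin.last P.m)
      · have hm' : 0 < P.m := by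
          rcases Nat.eq_zero_or_pos P.m with hm | hm
          · exfalso
            have hlast0 : Fin.last P.m = (0 : Fin (P.m + 1)) := Fin.ext (by simp [hm])
            exact hv1 (by rw [hq, hlast0]; exact hstart)
          · exact hm
        have hb2eq := not_consistent_eq C₂ d k (hc2' (k - 1) (by rwa [sub_add_cancel]))
        have hT2 : cirSum C₂ d (1/2) (C₂.vtx k)
            = δ (d (C₂.edge (k - 1)) (!(C₂.half (k - 1)))) := by
          rw [cirSum_of_eq C₂ d _ k hb2eq]; ring
        have hTP : pathSum P d (C₂.vtx k)
            = δ (d (P.edge ⟨P.m - 1, by omega⟩) (!(P.half ⟨P.m - 1, by omega⟩))) := by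
          rw [hq]; exact pathSum_last P d hm'
        have hne := hj2 ⟨P.m - 1, by omega⟩ (by show P.m - 1 + 1 = P.m; omega)
          (k - 1) (by rwa [sub_add_cancel])
        rw [hT1, hT2, hTP]
        have := δ_add_eq_zero hne
        linarith
      · have hT2 := cirSum_consistent C₂ d (1/2) k
          (hc2 (k - 1) (by rw [sub_add_cancel]; exact hq))
        have hvP : C₂.vtx k ∉ Set.range P.vtx := by
          rintro ⟨t, ht⟩
          by_cases h0 : t = 0
          · exact hv1 (by rw [← ht, h0]; exact hstart)
          by_cases hl : t = Fin.last P.m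
          · exact hq (by rw [← ht, hl])
          · exact (hpathint t h0 hl).2 ⟨k, ht.symm⟩
        have hTP := pathSum_not_mem P d _ hvP
        rw [hT1, hT2, hTP]; ring
    · have hT2 := cir_eval_not_mem C₂ d (1/2) v hv2
      by_cases hvP : v ∈ Set.range P.vtx
      · obtain ⟨t, ht⟩ := hvP
        subst ht
        have h0 : t ≠ 0 := fun h => hv1 (by rw [h]; exact hstart)
        have hl : t ≠ Fin.last P.m := fun h => hv2 (by rw [h]; exact hend)
        have hTP := pathSum_mid P d hP t h0 hl
        rw [hT1, hT2, hTP]; ring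
      · have hTP := pathSum_not_mem P d v hvP
        rw [hT1, hT2, hTP]; ring

lemma chi_flow [Fintype E] [DecidableEq V] (S : SignedCircuit G)
    (d : E → Bool → Bool) (hcd : S.ConsistentlyDirected d) (v : V) :
    (∑ e : E, ∑ i : Bool, if G.ends e i = v then δ (d e i) * S.chi e else 0) = 0 := by
  classical
  cases S with
  | balanced Cb hb =>
      have hcd' : ∀ i, Cb.ConsistentAt d i := hcd
      rw [← Finset.sum_subset (Finset.subset_univ (Finset.univ.image Cb.edge)) (by
        intro e _ he
        have hnr : e ∉ Set.range Cb.edge := by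
          rintro ⟨j, hj⟩; exact he (Finset.mem_image.mpr ⟨j, Finset.mem_univ _, hj⟩)
        have hchi : (SignedCircuit.balanced Cb hb).chi e = 0 := by
          simp [SignedCircuit.chi, hnr]
        simp [hchi])]
      rw [Finset.sum_image (fun a _ b _ h => Cb.edge_inj h)]
      have hchi1 : ∀ j, (SignedCircuit.balanced Cb hb).chi (Cb.edge j) = 1 := by
        intro j; simp [SignedCircuit.chi]
      have hrw : (∑ j : Fin (Cb.n + 1), ∑ i : Bool,
          if G.ends (Cb.edge j) i = v then δ (d (Cb.edge j) i)
            * (SignedCircuit.balanced Cb hb).chi (Cb.edge j) else 0) = cirSum Cb d 1 v := by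
        unfold cirSum
        refine Finset.sum_congr rfl fun j _ => Finset.sum_congr rfl fun i _ => ?_
        rw [hchi1 j]
      rw [hrw]
      by_cases hv : v ∈ Set.range Cb.vtx
      · obtain ⟨k, hk⟩ := hv
        subst hk
        exact cirSum_consistent Cb d 1 k (hcd' (k - 1))
      · exact cir_eval_not_mem Cb d 1 v hv
  | bicircuit C₁ C₂ P h₁ h₂ hstart hend hmeet hpathint hedisj hpe₁ hpe₂ =>
      obtain ⟨hc1, hc1', hc2, hc2', hP, hj1, hj2, hjj⟩ := hcd
      have hchi1 : ∀ j, (SignedCircuit.bicircuit C₁ C₂ P h₁ h₂ hstart hend hmeet hpathint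
          hedisj hpe₁ hpe₂).chi (C₁.edge j) = 1/2 := by
        intro j
        have hnP : C₁.edge j ∉ Set.range P.edge := by rintro ⟨a, ha⟩; exact hpe₁ a j ha
        have hmem : C₁.edge j ∈ Set.range C₁.edge ∪ Set.range C₂.edge := Or.inl ⟨j, rfl⟩
        simp [SignedCircuit.chi, hnP, hmem]
      have hchi2 : ∀ j, (SignedCircuit.bicircuit C₁ C₂ P h₁ h₂ hstart hend hmeet hpathint
          hedisj hpe₁ hpe₂).chi (C₂.edge j) = 1/2 := by
        intro j
        have hnP : C₂.edge j ∉ Set.range P.edge := by rintro ⟨a, ha⟩; exact hpe₂ a j ha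
        have hmem : C₂.edge j ∈ Set.range C₁.edge ∪ Set.range C₂.edge := Or.inr ⟨j, rfl⟩
        simp [SignedCircuit.chi, hnP, hmem]
      have hchiP : ∀ j, (SignedCircuit.bicircuit C₁ C₂ P h₁ h₂ hstart hend hmeet hpathint
          hedisj hpe₁ hpe₂).chi (P.edge j) = 1 := by
        intro j; simp [SignedCircuit.chi]
      have hdisj12 : Disjoint (Finset.univ.image C₁.edge) (Finset.univ.image C₂.edge) := by
        rw [Finset.disjoint_left]
        rintro e he1 he2
        obtain ⟨a, _, ha⟩ := Finset.mem_image.mp he1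
        obtain ⟨b, _, hb⟩ := Finset.mem_image.mp he2
        exact hedisj a b (ha.trans hb.symm)
      have hdisjP : Disjoint (Finset.univ.image C₁.edge ∪ Finset.univ.image C₂.edge)
          (Finset.univ.image P.edge) := by
        rw [Finset.disjoint_left]
        rintro e he heP
        obtain ⟨a, _, ha⟩ := Finset.mem_image.mp heP
        rcases Finset.mem_union.mp he with h | h
        · obtain ⟨b, _, hb⟩ := Finset.mem_image.mp h
          exact hpe₁ a b (ha.trans hb.symm)
        · obtain ⟨b, _, hb⟩ := Finset.mem_image.mp h
          exact hpe₂ a b (ha.trans hb.symm)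
      rw [← Finset.sum_subset (Finset.subset_univ
          (Finset.univ.image C₁.edge ∪ Finset.univ.image C₂.edge
            ∪ Finset.univ.image P.edge)) (by
        intro e _ he
        have h1 : e ∉ Set.range C₁.edge := by
          rintro ⟨j, hj⟩
          exact he (Finset.mem_union.mpr (Or.inl (Finset.mem_union.mpr (Or.inl
            (Finset.mem_image.mpr ⟨j, Finset.mem_univ _, hj⟩)))))
        have h2 : e ∉ Set.range C₂.edge := by
          rintro ⟨j, hj⟩
          exact he (Finset.mem_union.mpr (Or.inl (Finset.mem_union.mpr (Or.inr
            (Finset.mem_image.mpr ⟨j, Finset.mem_univ _, hj⟩)))))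
        have h3 : e ∉ Set.range P.edge := by
          rintro ⟨j, hj⟩
          exact he (Finset.mem_union.mpr (Or.inr
            (Finset.mem_image.mpr ⟨j, Finset.mem_univ _, hj⟩)))
        have hchi : (SignedCircuit.bicircuit C₁ C₂ P h₁ h₂ hstart hend hmeet hpathint
            hedisj hpe₁ hpe₂).chi e = 0 := by
          simp [SignedCircuit.chi, h1, h2, h3]
        simp [hchi])]
      rw [Finset.sum_union hdisjP, Finset.sum_union hdisj12]
      rw [Finset.sum_image (fun a _ b _ h => C₁.edge_inj h),
        Finset.sum_image (fun a _ b _ h => C₂.edge_inj h),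
        Finset.sum_image (fun a _ b _ h => P.edge_inj h)]
      have e1 : (∑ j : Fin (C₁.n + 1), ∑ i : Bool,
          if G.ends (C₁.edge j) i = v then δ (d (C₁.edge j) i)
            * (SignedCircuit.bicircuit C₁ C₂ P h₁ h₂ hstart hend hmeet hpathint
              hedisj hpe₁ hpe₂).chi (C₁.edge j) else 0) = cirSum C₁ d (1/2) v := by
        unfold cirSum
        refine Finset.sum_congr rfl fun j _ => Finset.sum_congr rfl fun i _ => ?_
        rw [hchi1 j]
      have e2 : (∑ j : Fin (C₂.n + 1), ∑ i : Bool,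
          if G.ends (C₂.edge j) i = v then δ (d (C₂.edge j) i)
            * (SignedCircuit.bicircuit C₁ C₂ P h₁ h₂ hstart hend hmeet hpathint
              hedisj hpe₁ hpe₂).chi (C₂.edge j) else 0) = cirSum C₂ d (1/2) v := by
        unfold cirSum
        refine Finset.sum_congr rfl fun j _ => Finset.sum_congr rfl fun i _ => ?_
        rw [hchi2 j]
      have e3 : (∑ j : Fin P.m, ∑ i : Bool,
          if G.ends (P.edge j) i = v then δ (d (P.edge j) i)
            * (SignedCircuit.bicircuit C₁ C₂ P h₁ h₂ hstart hend hmeet hpathint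
              hedisj hpe₁ hpe₂).chi (P.edge j) else 0) = pathSum P d v := by
        unfold pathSum
        refine Finset.sum_congr rfl fun j _ => Finset.sum_congr rfl fun i _ => ?_
        rw [hchiP j, mul_one]
      rw [e1, e2, e3]
      exact bi_flow C₁ C₂ P d hstart hend hmeet hpathint hc1 hc1' hc2 hc2' hP hj1 hj2 hjj v

lemma chi_cases (S : SignedCircuit G) (e : E) :
    S.chi e = 0 ∨ S.chi e = 1/2 ∨ S.chi e = 1 := by
  classical
  cases S with
  | balanced C hb =>
      by_cases h : e ∈ Set.range C.edge <;> simp [SignedCircuit.chi, h]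
  | bicircuit C₁ C₂ P h₁ h₂ hstart hend hmeet hpathint hedisj hpe₁ hpe₂ =>
      by_cases hp : e ∈ Set.range P.edge
      · simp [SignedCircuit.chi, hp]
      · by_cases hc : e ∈ Set.range C₁.edge ∪ Set.range C₂.edge <;>
          simp [SignedCircuit.chi, hp, hc]

lemma chi_ne_zero_of_mem (S : SignedCircuit G) (e : E) (h : e ∈ S.edges) :
    S.chi e ≠ 0 := by
  classical
  cases S with
  | balanced C hb =>
      have h' : e ∈ Set.range C.edge := h
      simp [SignedCircuit.chi, h']
  | bicircuit C₁ C₂ P h₁ h₂ hstart hend hmeet hpathint hedisj hpe₁ hpe₂ =>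
      by_cases hp : e ∈ Set.range P.edge
      · simp [SignedCircuit.chi, hp]
      · have h' : e ∈ Set.range C₁.edge ∪ Set.range C₂.edge := by
          rcases h with h | h
          · exact h
          · exact absurd h hp
        simp [SignedCircuit.chi, hp, h']

lemma geom_lt (n : ℕ) : (∑ x ∈ Finset.range n, 2 * (4:ℚ) ^ x) < 4 ^ n := by
  induction n with
  | zero => norm_num
  | succ n ih =>
      rw [Finset.sum_range_succ, pow_succ]
      nlinarith [pow_pos (show (0:ℚ) < 4 by norm_num) n]

lemma key_ne_zero {r : ℕ} (a : Fin r → ℚ)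
    (hub : ∀ i, |a i| ≤ 2 * 4 ^ (i : ℕ))
    (hlb : ∀ i, a i ≠ 0 → 4 ^ (i : ℕ) ≤ |a i|)
    (hne : ∃ i, a i ≠ 0) : (∑ i, a i) ≠ 0 := by
  classical
  set t := Finset.univ.filter (fun i => a i ≠ 0) with ht
  have htne : t.Nonempty := by
    obtain ⟨i, hi⟩ := hne
    exact ⟨i, by simp [ht, hi]⟩
  set M := t.max' htne with hM
  have hMt : M ∈ t := t.max'_mem htne
  have haM : a M ≠ 0 := by
    have := hMt; rw [ht, Finset.mem_filter] at this; exact this.2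
  have hsum : (∑ i, a i) = ∑ i ∈ t, a i := by
    rw [ht, Finset.sum_filter_ne_zero]
  rw [hsum, ← Finset.add_sum_erase _ _ hMt]
  have hrest : |∑ i ∈ t.erase M, a i| < 4 ^ (M : ℕ) := by
    calc |∑ i ∈ t.erase M, a i| ≤ ∑ i ∈ t.erase M, |a i| :=
          Finset.abs_sum_le_sum_abs _ _
      _ ≤ ∑ i ∈ t.erase M, 2 * 4 ^ (i : ℕ) := Finset.sum_le_sum (fun i _ => hub i)
      _ = ∑ x ∈ (t.erase M).image (Fin.val), 2 * 4 ^ x := by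
          rw [Finset.sum_image (fun x _ y _ h => Fin.ext h)]
      _ ≤ ∑ x ∈ Finset.range (M : ℕ), 2 * 4 ^ x := by
          apply Finset.sum_le_sum_of_subset_of_nonneg
          · intro x hx
            obtain ⟨i, hi, rfl⟩ := Finset.mem_image.mp hx
            have hiM : i ≠ M := (Finset.mem_erase.mp hi).1
            have hle : i ≤ M := t.le_max' i (Finset.mem_erase.mp hi).2
            have hvne : (i : ℕ) ≠ (M : ℕ) := fun hh => hiM (Fin.ext hh)
            have hlt : (i : ℕ) < (M : ℕ) := lt_of_le_of_ne (Fin.le_def.mp hle) hvne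
            exact Finset.mem_range.mpr hlt
          · intro x _ _; positivity
      _ < 4 ^ (M : ℕ) := geom_lt _
  have h4 : (4:ℚ) ^ (M : ℕ) ≤ |a M| := hlb M haM
  intro h0
  have hM' : a M = - ∑ i ∈ t.erase M, a i := eq_neg_of_add_eq_zero_left h0
  rw [hM', abs_neg] at h4
  linarith

lemma reorient_net [Fintype E] [DecidableEq V] (O : SOrientation G)
    (sr : E → Bool) (g : E → ℚ) (v : V) :
    (∑ e : E, ∑ b : Bool,
        if G.ends e b = v then δ (O.dir e b) * (if sr e then -g e else g e) else 0)
      = ∑ e : E, ∑ b : Bool,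
        if G.ends e b = v then δ ((O.reorient sr).dir e b) * g e else 0 := by
  refine Finset.sum_congr rfl fun e _ => Finset.sum_congr rfl fun b _ => ?_
  by_cases hP : G.ends e b = v
  · simp only [if_pos hP, SOrientation.reorient]
    cases hse : sr e <;> cases O.dir e b <;> simp [hse, δ]
  · simp [hP]

lemma net_sum [Fintype E] [DecidableEq V] (O : SOrientation G)
    {r : ℕ} (c : Fin r → ℚ) (u : Fin r → E → ℚ) (v : V) :
    (∑ e : E, ∑ b : Bool,
        if G.ends e b = v then δ (O.dir e b) * (∑ i, c i * u i e) else 0)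
      = ∑ i, c i * ∑ e : E, ∑ b : Bool,
          if G.ends e b = v then δ (O.dir e b) * u i e else 0 := by
  have key : ∀ e b, (if G.ends e b = v then δ (O.dir e b) * (∑ i, c i * u i e) else 0)
      = ∑ i, c i * (if G.ends e b = v then δ (O.dir e b) * u i e else 0) := by
    intro e b
    split_ifs with h
    · rw [Finset.mul_sum]
      exact Finset.sum_congr rfl fun i _ => by ring
    · simp
  rw [Finset.sum_congr rfl fun e (_ : e ∈ Finset.univ) =>
    Finset.sum_congr rfl fun b (_ : b ∈ Finset.univ) => key e b]
  rw [Finset.sum_congr rfl fun e (_ : e ∈ Finset.univ) => Finset.sum_comm]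
  rw [Finset.sum_comm]
  refine Finset.sum_congr rfl fun i _ => ?_
  rw [Finset.mul_sum]
  exact Finset.sum_congr rfl fun e _ => (Finset.mul_sum _ _ _).symm

end NZAux


/-- If `C₁, …, C_r` are distinct signed circuits covering every edge of `G`,
each consistently directed with respect to the fixed orientation up to a
reversal of some edges, then `ψ = ∑ 2^(2i-1) χ_{C_i}` (with the values on the
reversed edges negated) is a nowhere-zero integer flow on `G`. -/
theorem cover_gives_nzflow {V E : Type} [Fintype E] [DecidableEq V]
    (G : SignedGraph V E) (O : SOrientation G) (r : ℕ)
    (C : Fin r → SignedCircuit G) (hCinj : Function.Injective C)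
    (s : Fin r → E → Bool)
    (hcons : ∀ i, (C i).ConsistentlyDirected (O.reorient (s i)).dir)
    (hcover : ∀ e : E, ∃ i, e ∈ (C i).edges) :
    IsFlow O (fun e => ∑ i : Fin r,
        (2 : ℚ) ^ (2 * (i : ℕ) + 1) *
          (if s i e then -((C i).chi e) else (C i).chi e)) ∧
    (∀ e : E, (∑ i : Fin r, (2 : ℚ) ^ (2 * (i : ℕ) + 1) *
        (if s i e then -((C i).chi e) else (C i).chi e)) ≠ 0) ∧
    (∀ e : E, ∃ z : ℤ, (∑ i : Fin r, (2 : ℚ) ^ (2 * (i : ℕ) + 1) *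
        (if s i e then -((C i).chi e) else (C i).chi e)) = (z : ℚ)) := by
  classical
  have hp : ∀ i : ℕ, (2:ℚ) ^ (2 * i + 1) = 2 * 4 ^ i := by
    intro i
    rw [pow_succ, pow_mul]
    norm_num [mul_comm]
  refine ⟨?_, ?_, ?_⟩
  · rw [NZAux.isFlow_iff]
    intro v
    rw [NZAux.net_sum O (fun i => (2:ℚ) ^ (2 * (i:ℕ) + 1))
      (fun i e => if s i e then -((C i).chi e) else (C i).chi e) v]
    refine Finset.sum_eq_zero fun i _ => ?_
    rw [NZAux.reorient_net O (s i) ((C i).chi) v,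
      NZAux.chi_flow (C i) _ (hcons i) v, mul_zero]
  · intro e
    apply NZAux.key_ne_zero
    · intro i
      have habs : |if s i e then -((C i).chi e) else (C i).chi e| ≤ 1 := by
        rcases NZAux.chi_cases (C i) e with h | h | h <;> cases hs : s i e <;>
          simp [hs, h, abs_le] <;> norm_num
      calc |(2:ℚ) ^ (2 * (i:ℕ) + 1) * (if s i e then -((C i).chi e) else (C i).chi e)|
          = (2:ℚ) ^ (2 * (i:ℕ) + 1)
            * |if s i e then -((C i).chi e) else (C i).chi e| := by
            rw [abs_mul, abs_of_nonneg (by positivity)]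
        _ ≤ (2:ℚ) ^ (2 * (i:ℕ) + 1) * 1 := by
            exact mul_le_mul_of_nonneg_left habs (by positivity)
        _ = 2 * 4 ^ (i:ℕ) := by rw [mul_one, hp]
    · intro i hne
      have hu : (if s i e then -((C i).chi e) else (C i).chi e) ≠ 0 := by
        intro h
        exact hne (by rw [h, mul_zero])
      have habs : (1:ℚ)/2 ≤ |if s i e then -((C i).chi e) else (C i).chi e| := by
        rcases NZAux.chi_cases (C i) e with h | h | h <;> cases hs : s i e <;>
          simp [hs, h, le_abs] at hu ⊢ <;> norm_num
      calc (4:ℚ) ^ (i:ℕ) = (2 * 4 ^ (i:ℕ)) * (1/2) := by ring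
        _ ≤ (2:ℚ) ^ (2 * (i:ℕ) + 1)
            * |if s i e then -((C i).chi e) else (C i).chi e| := by
            rw [hp]
            exact mul_le_mul_of_nonneg_left habs (by positivity)
        _ = |(2:ℚ) ^ (2 * (i:ℕ) + 1)
            * (if s i e then -((C i).chi e) else (C i).chi e)| := by
            rw [abs_mul,
              abs_of_nonneg (show (0:ℚ) ≤ (2:ℚ) ^ (2 * (i:ℕ) + 1) by positivity)]
    · obtain ⟨i, hi⟩ := hcover e
      have hchi := NZAux.chi_ne_zero_of_mem (C i) e hi
      refine ⟨i, mul_ne_zero (by positivity) ?_⟩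
      cases hs : s i e <;> simp [hs, hchi]
  · intro e
    have hterm : ∀ i : Fin r, ∃ z : ℤ,
        (2:ℚ) ^ (2 * (i:ℕ) + 1) * (if s i e then -((C i).chi e) else (C i).chi e)
          = (z : ℚ) := by
      intro i
      rcases NZAux.chi_cases (C i) e with h | h | h <;> cases hs : s i e
      · exact ⟨0, by simp [hs, h]⟩
      · exact ⟨0, by simp [hs, h]⟩
      · refine ⟨2 ^ (2 * (i:ℕ)), ?_⟩
        simp only [hs, if_neg Bool.false_ne_true, h]
        push_cast
        rw [pow_succ]
        ring
      · refine ⟨-(2 ^ (2 * (i:ℕ))), ?_⟩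
        simp only [hs, if_pos rfl, h]
        push_cast
        rw [pow_succ]
        ring
      · refine ⟨2 ^ (2 * (i:ℕ) + 1), ?_⟩
        simp only [hs, if_neg Bool.false_ne_true, h]
        push_cast
        ring
      · refine ⟨-(2 ^ (2 * (i:ℕ) + 1)), ?_⟩
        simp only [hs, if_pos rfl, h]
        push_cast
        ring
    choose zf hzf using hterm
    refine ⟨∑ i, zf i, ?_⟩
    rw [Finset.sum_congr rfl fun i _ => hzf i]
    push_cast
    ring
end

section
/- Let G be a bidirected signed graph carrying a nonzero integer flow that is positive on every edge of its nonempty support G₁, and suppose G₁ contains no consistently directed balanced circuit. Then G₁ contains a consistently directed unbalanced circuit, i.e., a circuit with an odd number of negative edges that is consistently directed at all its vertices except exactly one faulty vertex. -/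
variable {V E : Type}

section Parity

variable {V E : Type} {G : SignedGraph V E}

instance {C : Circuit G} {d : E → Bool → Bool} : DecidablePred (C.ConsistentAt d) := fun i => by
  unfold Circuit.ConsistentAt; infer_instance

/-- Indicator of a Bool in `ZMod 2`. -/
def bitZ : Bool → ZMod 2 := fun b => if b then 1 else 0

lemma ind_eq (x y : Bool) : (if x = y then (1 : ZMod 2) else 0) = 1 + bitZ x + bitZ y := by
  cases x <;> cases y <;> decide

lemma ind_xor (x y : Bool) : (if xor x y = false then (1 : ZMod 2) else 0) = 1 + bitZ x + bitZ y := by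
  cases x <;> cases y <;> decide

lemma bitZ_half (d : E → Bool → Bool) (e : E) (h : Bool) :
    bitZ (d e false) + bitZ (d e true) = bitZ (d e h) + bitZ (d e (!h)) := by
  cases h
  · rfl
  · exact add_comm _ _

/-- Parity lemma: the number of inconsistent vertices of a circuit is congruent
mod 2 to the number of its negative edges. -/
lemma Circuit.parity (O : SOrientation G) (C : Circuit G) :
    (Finset.univ.filter fun i => ¬ C.ConsistentAt O.dir i).card
      ≡ (Finset.univ.filter fun i => G.sign (C.edge i) = false).card [MOD 2] := by
  have hd : O.dir = O.dir := rfl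
  rw [← ZMod.natCast_eq_natCast_iff]
  rw [Finset.card_filter, Finset.card_filter]
  push_cast
  have h1 : ∀ i : Fin (C.n + 1),
      (if ¬ C.ConsistentAt O.dir i then (1 : ZMod 2) else 0)
        = 1 + bitZ (O.dir (C.edge i) (!(C.half i))) + bitZ (O.dir (C.edge (i+1)) (C.half (i+1))) := by
    intro i
    rw [← ind_eq]
    exact if_congr not_not rfl rfl
  have h2 : ∀ i : Fin (C.n + 1),
      (if G.sign (C.edge i) = false then (1 : ZMod 2) else 0)
        = 1 + bitZ (O.dir (C.edge i) (C.half i)) + bitZ (O.dir (C.edge i) (!(C.half i))) := by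
    intro i
    rw [O.compat (C.edge i)]
    cases hch : C.half i <;>
      cases hf : O.dir (C.edge i) false <;> cases ht : O.dir (C.edge i) true <;>
      simp [hf, ht, bitZ] <;> decide
  rw [Finset.sum_congr rfl (fun i _ => h1 i), Finset.sum_congr rfl (fun i _ => h2 i)]
  rw [Finset.sum_add_distrib, Finset.sum_add_distrib, Finset.sum_add_distrib,
    Finset.sum_add_distrib]
  have hre : ∑ i : Fin (C.n+1), bitZ (O.dir (C.edge (i+1)) (C.half (i+1)))
      = ∑ i : Fin (C.n+1), bitZ (O.dir (C.edge i) (C.half i)) :=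
    Fintype.sum_equiv (Equiv.addRight 1) _ _ (fun i => rfl)
  rw [hre]
  ring

end Parity
section Main

variable {V E : Type} [Fintype E] [DecidableEq V] {G : SignedGraph V E}
set_option linter.unusedSectionVars false

/-- A circuit consistent everywhere is balanced. -/
lemma balanced_of_consistent (O : SOrientation G) (C : Circuit G)
    (h : ∀ i, C.ConsistentAt O.dir i) : C.Balanced := by
  have hp := C.parity O
  have h0 : (Finset.univ.filter fun i => ¬ C.ConsistentAt O.dir i) = ∅ := by
    apply Finset.filter_eq_empty_iff.2
    intro i _
    exact not_not_intro (h i)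
  rw [h0] at hp
  simp only [Finset.card_empty] at hp
  unfold Circuit.Balanced
  rw [Nat.even_iff]
  exact (Nat.ModEq.symm hp).trans rfl

/-- A circuit inconsistent at exactly one vertex is unbalanced. -/
lemma unbalanced_of_one_fault (O : SOrientation G) (C : Circuit G) (j : Fin (C.n + 1))
    (hj : ¬ C.ConsistentAt O.dir j) (h : ∀ i, i ≠ j → C.ConsistentAt O.dir i) :
    ¬ C.Balanced := by
  have hp := C.parity O
  have h0 : (Finset.univ.filter fun i => ¬ C.ConsistentAt O.dir i) = {j} := by
    apply Finset.eq_singleton_iff_unique_mem.2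
    refine ⟨Finset.mem_filter.2 ⟨Finset.mem_univ _, hj⟩, fun x hx => ?_⟩
    by_contra hxj
    exact (Finset.mem_filter.1 hx).2 (h x hxj)
  rw [h0] at hp
  simp only [Finset.card_singleton] at hp
  unfold Circuit.Balanced
  rw [Nat.even_iff]
  have h1 : (Finset.univ.filter fun i => G.sign (C.edge i) = false).card % 2 = 1 % 2 :=
    Nat.ModEq.symm hp
  omega

/-- Kirchhoff extraction: if a nonneg flow is positive on a half-edge at `v`,
there is a half-edge at `v` in the opposite direction carrying positive flow. -/
lemma exists_opposite (O : SOrientation G) (φ : E → ℤ) (hφ : IsFlow O φ)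
    (hpos : ∀ e, 0 ≤ φ e) (e : E) (h' : Bool) (v : V) (hev : G.ends e h' = v)
    (hnz : φ e ≠ 0) :
    ∃ f j, G.ends f j = v ∧ O.dir f j = !(O.dir e h') ∧ φ f ≠ 0 := by
  by_contra hcon
  push_neg at hcon
  have hsum_opp : (∑ f : E, ∑ j : Bool,
      if G.ends f j = v ∧ O.dir f j = !(O.dir e h') then φ f else 0) = 0 := by
    apply Finset.sum_eq_zero; intro f _
    apply Finset.sum_eq_zero; intro j _
    split_ifs with hh
    · exact hcon f j hh.1 hh.2
    · rfl
  have hsum_pos : φ e ≤ ∑ f : E, ∑ j : Bool,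
      if G.ends f j = v ∧ O.dir f j = O.dir e h' then φ f else 0 := by
    have h1 : φ e ≤ ∑ j : Bool,
        if G.ends e j = v ∧ O.dir e j = O.dir e h' then φ e else 0 := by
      have hnn : ∀ j : Bool, j ∈ Finset.univ → (0:ℤ) ≤
          if G.ends e j = v ∧ O.dir e j = O.dir e h' then φ e else 0 := by
        intro j _
        split_ifs
        exacts [hpos e, le_refl _]
      have := Finset.single_le_sum hnn (Finset.mem_univ h')
      rwa [if_pos ⟨hev, rfl⟩] at this
    have hnn2 : ∀ f : E, f ∈ Finset.univ → (0:ℤ) ≤ ∑ j : Bool,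
        if G.ends f j = v ∧ O.dir f j = O.dir e h' then φ f else 0 := by
      intro f _
      apply Finset.sum_nonneg
      intro j _
      split_ifs
      exacts [hpos f, le_refl _]
    exact le_trans h1 (Finset.single_le_sum hnn2 (Finset.mem_univ e))
  have hflow := hφ v
  have hezero : φ e ≤ 0 := by
    cases hc : O.dir e h'
    · rw [hc] at hsum_pos hsum_opp
      simp only [Bool.not_false] at hsum_opp
      rw [← hflow, hsum_opp] at hsum_pos
      exact hsum_pos
    · rw [hc] at hsum_pos hsum_opp
      simp only [Bool.not_true] at hsum_opp
      rw [hflow, hsum_opp] at hsum_pos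
      exact hsum_pos
  exact hnz (le_antisymm hezero (hpos e))


/-- The circuit obtained by closing a path `P` with an extra edge `f` joining
the end of `P` back to its vertex `t`. -/
def closeCirc (P : GPath G) (f : E) (j : Bool) (t : Fin (P.m + 1))
    (hfv : G.ends f j = P.vtx (Fin.last P.m))
    (hfw : G.ends f (!j) = P.vtx t)
    (hfnew : ∀ s : Fin P.m, f ≠ P.edge s) : Circuit G where
  n := P.m - t
  vtx i := P.vtx ⟨t + i.val, by have h1 := i.isLt; have h2 := t.isLt; omega⟩
  edge i := if h : i.val < P.m - t then P.edge ⟨t + i.val, by omega⟩ else f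
  half i := if h : i.val < P.m - t then P.half ⟨t + i.val, by omega⟩ else j
  vtx_inj := by
    intro a b hab
    dsimp only at hab
    have h2 := congrArg Fin.val (P.vtx_inj hab)
    simp only at h2
    exact Fin.ext (by omega)
  edge_inj := by
    intro a b hab
    dsimp only at hab
    by_cases ha : a.val < P.m - t <;> by_cases hb : b.val < P.m - t
    · rw [dif_pos ha, dif_pos hb] at hab
      have h2 := congrArg Fin.val (P.edge_inj hab)
      simp only at h2
      exact Fin.ext (by omega)
    · rw [dif_pos ha, dif_neg hb] at hab
      exact absurd hab.symm (hfnew _)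
    · rw [dif_neg ha, dif_pos hb] at hab
      exact absurd hab (hfnew _)
    · have h1 := a.isLt
      have h2 := b.isLt
      exact Fin.ext (by omega)
  ends_src := by
    intro i
    by_cases hi : i.val < P.m - t
    · rw [dif_pos hi, dif_pos hi]
      exact (P.ends_src ⟨t + i.val, by omega⟩).trans
        (congrArg P.vtx (Fin.ext (by simp)))
    · rw [dif_neg hi, dif_neg hi]
      have hiv : (i : ℕ) = P.m - t := by have := i.isLt; omega
      have h2 := t.isLt
      exact hfv.trans (congrArg P.vtx (Fin.ext (by simp [Fin.last]; omega)))
  ends_tgt := by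
    intro i
    by_cases hi : i.val < P.m - t
    · rw [dif_pos hi, dif_pos hi]
      have hne : i ≠ Fin.last (P.m - t) := by
        intro hh
        rw [hh] at hi
        simp [Fin.last] at hi
      have hadd : ((i + 1 : Fin (P.m - t + 1)) : ℕ) = i.val + 1 := by
        rw [Fin.val_add_one]
        simp [hne]
      exact (P.ends_tgt ⟨t + i.val, by omega⟩).trans
        (congrArg P.vtx (Fin.ext (by simp [Fin.succ, hadd]; omega)))
    · rw [dif_neg hi, dif_neg hi]
      have hiv : (i : ℕ) = P.m - t := by have := i.isLt; omega
      have hlast : i = Fin.last (P.m - t) := Fin.ext (by simp [Fin.last, hiv])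
      have hadd : ((i + 1 : Fin (P.m - t + 1)) : ℕ) = 0 := by
        rw [Fin.val_add_one, if_pos hlast]
      exact hfw.trans (congrArg P.vtx (Fin.ext (by simp [hadd])))

/-- Closing a consistently directed path with an extra edge `f` back to a
vertex of the path yields a circuit with at most one faulty vertex. -/
lemma close_circuit (d : E → Bool → Bool) (φ : E → ℤ) (P : GPath G)
    (hP : P.ConsDir d) (hnzP : ∀ i, φ (P.edge i) ≠ 0) (f : E) (j : Bool)
    (t : Fin (P.m + 1))
    (hfv : G.ends f j = P.vtx (Fin.last P.m))
    (hfw : G.ends f (!j) = P.vtx t)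
    (hfnew : ∀ s : Fin P.m, f ≠ P.edge s)
    (hnzf : φ f ≠ 0)
    (hcons : ∀ a : Fin P.m, (a : ℕ) + 1 = P.m → d (P.edge a) (!(P.half a)) ≠ d f j) :
    ∃ C : Circuit G, (∀ i, φ (C.edge i) ≠ 0) ∧
      ∃ jj, ∀ i, i ≠ jj → C.ConsistentAt d i := by
  have hnz : ∀ i : Fin (P.m - (t:ℕ) + 1),
      φ ((closeCirc P f j t hfv hfw hfnew).edge i) ≠ 0 := by
    intro i
    show φ (if h : (i : ℕ) < P.m - (t:ℕ) then P.edge ⟨t + i.val, by omega⟩ else f) ≠ 0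
    by_cases hi : (i : ℕ) < P.m - (t:ℕ)
    · rw [dif_pos hi]; exact hnzP _
    · rw [dif_neg hi]; exact hnzf
  have hg : ∀ i : Fin (P.m - (t:ℕ) + 1), i ≠ Fin.last (P.m - (t:ℕ)) →
      (closeCirc P f j t hfv hfw hfnew).ConsistentAt d i := by
    intro i hne
    have hilt := i.isLt
    have hi : (i : ℕ) < P.m - (t:ℕ) := by
      have h2 : (i : ℕ) ≠ P.m - (t:ℕ) := fun hh => hne (Fin.ext (by simp [Fin.last, hh]))
      omega
    have hadd : ((i + 1 : Fin (P.m - (t:ℕ) + 1)) : ℕ) = (i : ℕ) + 1 := by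
      rw [Fin.val_add_one]
      simp [hne]
    unfold Circuit.ConsistentAt closeCirc
    dsimp only
    simp only [hadd]
    rw [dif_pos hi, dif_pos hi]
    by_cases hi2 : (i : ℕ) + 1 < P.m - (t:ℕ)
    · rw [dif_pos hi2, dif_pos hi2]
      exact hP ⟨t + (i:ℕ), by omega⟩ ⟨t + ((i:ℕ) + 1), by omega⟩ (by simp; omega)
    · rw [dif_neg hi2, dif_neg hi2]
      exact hcons ⟨t + (i:ℕ), by omega⟩ (by simp only [Fin.val_mk]; omega)
  exact ⟨closeCirc P f j t hfv hfw hfnew, hnz, Fin.last (P.m - (t:ℕ)), hg⟩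
/-- Extending a path by one edge `f` to a fresh vertex. -/
def extPath (P : GPath G) (f : E) (j : Bool)
    (hfv : G.ends f j = P.vtx (Fin.last P.m))
    (hfnew : ∀ s : Fin P.m, f ≠ P.edge s)
    (hw : ∀ t : Fin (P.m + 1), G.ends f (!j) ≠ P.vtx t) : GPath G where
  m := P.m + 1
  vtx i := if h : i.val < P.m + 1 then P.vtx ⟨i.val, h⟩ else G.ends f (!j)
  edge i := if h : i.val < P.m then P.edge ⟨i.val, h⟩ else f
  half i := if h : i.val < P.m then P.half ⟨i.val, h⟩ else j
  vtx_inj := by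
    intro a b hab
    dsimp only at hab
    by_cases ha : a.val < P.m + 1 <;> by_cases hb : b.val < P.m + 1
    · rw [dif_pos ha, dif_pos hb] at hab
      have h2 := congrArg Fin.val (P.vtx_inj hab)
      simp only at h2
      exact Fin.ext (by omega)
    · rw [dif_pos ha, dif_neg hb] at hab
      exact absurd hab.symm (hw _)
    · rw [dif_neg ha, dif_pos hb] at hab
      exact absurd hab (hw _)
    · have h1 := a.isLt
      have h2 := b.isLt
      exact Fin.ext (by omega)
  edge_inj := by
    intro a b hab
    dsimp only at hab
    by_cases ha : a.val < P.m <;> by_cases hb : b.val < P.m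
    · rw [dif_pos ha, dif_pos hb] at hab
      have h2 := congrArg Fin.val (P.edge_inj hab)
      simp only at h2
      exact Fin.ext (by omega)
    · rw [dif_pos ha, dif_neg hb] at hab
      exact absurd hab.symm (hfnew _)
    · rw [dif_neg ha, dif_pos hb] at hab
      exact absurd hab (hfnew _)
    · have h1 := a.isLt
      have h2 := b.isLt
      exact Fin.ext (by omega)
  ends_src := by
    intro i
    have hic : (i.castSucc : ℕ) = (i : ℕ) := rfl
    by_cases hi : i.val < P.m
    · rw [dif_pos hi, dif_pos hi, dif_pos (show (i.castSucc : ℕ) < P.m + 1 by omega)]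
      exact (P.ends_src ⟨i.val, hi⟩).trans (congrArg P.vtx (Fin.ext (by simp)))
    · have hiv : (i : ℕ) = P.m := by have := i.isLt; omega
      rw [dif_neg hi, dif_neg hi, dif_pos (show (i.castSucc : ℕ) < P.m + 1 by omega)]
      exact hfv.trans (congrArg P.vtx (Fin.ext (by simp [Fin.last, hic, hiv])))
  ends_tgt := by
    intro i
    have his : (i.succ : ℕ) = (i : ℕ) + 1 := rfl
    by_cases hi : i.val < P.m
    · rw [dif_pos hi, dif_pos hi, dif_pos (show (i.succ : ℕ) < P.m + 1 by omega)]
      exact (P.ends_tgt ⟨i.val, hi⟩).trans (congrArg P.vtx (Fin.ext (by simp [his])))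
    · have hiv : (i : ℕ) = P.m := by have := i.isLt; omega
      rw [dif_neg hi, dif_neg hi, dif_neg (show ¬ (i.succ : ℕ) < P.m + 1 by omega)]

/-- One extension step: either we close a circuit (with at most one fault),
or we obtain a strictly longer consistently directed path in the support. -/
lemma step (O : SOrientation G) (φ : E → ℤ) (hφ : IsFlow O φ) (hpos : ∀ e, 0 ≤ φ e)
    (P : GPath G) (hm : 1 ≤ P.m) (hP : P.ConsDir O.dir)
    (hnz : ∀ i, φ (P.edge i) ≠ 0) :
    (∃ C : Circuit G, (∀ i, φ (C.edge i) ≠ 0) ∧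
        ∃ jj, ∀ i, i ≠ jj → C.ConsistentAt O.dir i)
    ∨ (∃ P' : GPath G, P'.m = P.m + 1 ∧ P'.ConsDir O.dir ∧
        ∀ i, φ (P'.edge i) ≠ 0) := by
  have ha : P.m - 1 < P.m := by omega
  set a : Fin P.m := ⟨P.m - 1, ha⟩ with haa
  have hev : G.ends (P.edge a) (!(P.half a)) = P.vtx (Fin.last P.m) := by
    rw [P.ends_tgt a]
    exact congrArg P.vtx (Fin.ext (by simp [Fin.last, haa, Fin.succ]; omega))
  obtain ⟨f, j, hfj, hdir, hφf⟩ :=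
    exists_opposite O φ hφ hpos (P.edge a) (!(P.half a)) _ hev (hnz a)
  have hfnew : ∀ s : Fin P.m, f ≠ P.edge s := by
    intro s heq
    have hjs : j = P.half s ∨ j = !(P.half s) := by
      cases j <;> cases hs : P.half s <;> simp
    rcases hjs with h1 | h2
    · have hsrc := P.ends_src s
      rw [← heq, ← h1] at hsrc
      have := P.vtx_inj (hsrc.symm.trans hfj)
      have hv := congrArg Fin.val this
      simp [Fin.last] at hv
      have := s.isLt
      omega
    · have htgt := P.ends_tgt s
      rw [← heq, ← h2] at htgt
      have := P.vtx_inj (htgt.symm.trans hfj)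
      have hv := congrArg Fin.val this
      simp [Fin.last, Fin.succ] at hv
      have hsa : s = a := Fin.ext (by simp [haa]; omega)
      rw [heq, hsa, h2, hsa] at hdir
      exact (Bool.not_ne_self _) hdir.symm
  have hconsf : ∀ b : Fin P.m, (b : ℕ) + 1 = P.m →
      O.dir (P.edge b) (!(P.half b)) ≠ O.dir f j := by
    intro b hb
    have hba : b = a := Fin.ext (by simp [haa]; omega)
    rw [hba, hdir]
    exact Ne.symm (Bool.not_ne_self _)
  by_cases hw : ∃ t : Fin (P.m + 1), G.ends f (!j) = P.vtx t
  · obtain ⟨t, hfw⟩ := hw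
    exact Or.inl (close_circuit O.dir φ P hP hnz f j t hfj hfw hfnew hφf hconsf)
  · push_neg at hw
    refine Or.inr ⟨extPath P f j hfj hfnew hw, rfl, ?_, ?_⟩
    · intro x y hxy
      have hx : (x : ℕ) < P.m + 1 := x.isLt
      have hy : (y : ℕ) < P.m + 1 := y.isLt
      show O.dir (if h : (x : ℕ) < P.m then P.edge ⟨x, h⟩ else f)
            (!(if h : (x : ℕ) < P.m then P.half ⟨x, h⟩ else j))
          ≠ O.dir (if h : (y : ℕ) < P.m then P.edge ⟨y, h⟩ else f)
            (if h : (y : ℕ) < P.m then P.half ⟨y, h⟩ else j)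
      have hx' : (x : ℕ) < P.m := by omega
      by_cases hy' : (y : ℕ) < P.m
      · rw [dif_pos hx', dif_pos hx', dif_pos hy', dif_pos hy']
        exact hP ⟨x, hx'⟩ ⟨y, hy'⟩ (by simpa)
      · rw [dif_pos hx', dif_pos hx', dif_neg hy', dif_neg hy']
        exact hconsf ⟨x, hx'⟩ (by simp; omega)
    · intro i
      show φ (if h : (i : ℕ) < P.m then P.edge ⟨i, h⟩ else f) ≠ 0
      by_cases hi : (i : ℕ) < P.m
      · rw [dif_pos hi]; exact hnz _
      · rw [dif_neg hi]; exact hφf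
/-- Iterating the extension step: since path lengths are bounded by the number
of edges, we must eventually close a circuit. -/
lemma grow (O : SOrientation G) (φ : E → ℤ) (hφ : IsFlow O φ) (hpos : ∀ e, 0 ≤ φ e) :
    ∀ k : ℕ, ∀ P : GPath G, 1 ≤ P.m → P.ConsDir O.dir →
      (∀ i, φ (P.edge i) ≠ 0) → Fintype.card E ≤ P.m + k →
      ∃ C : Circuit G, (∀ i, φ (C.edge i) ≠ 0) ∧
        ∃ jj, ∀ i, i ≠ jj → C.ConsistentAt O.dir i := by
  intro k
  induction k with
  | zero =>
    intro P hm hP hnz hcard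
    rcases step O φ hφ hpos P hm hP hnz with h | ⟨P', hm', hP', hnz'⟩
    · exact h
    · exfalso
      have hle : P'.m ≤ Fintype.card E := by
        simpa using Fintype.card_le_of_injective P'.edge P'.edge_inj
      omega
  | succ k ih =>
    intro P hm hP hnz hcard
    rcases step O φ hφ hpos P hm hP hnz with h | ⟨P', hm', hP', hnz'⟩
    · exact h
    · exact ih P' (by omega) hP' hnz' (by omega)

/-- From a circuit with at most one fault, conclude: either it contradicts the
absence of consistent balanced circuits, or it is the desired unbalanced one. -/
lemma wrapup (O : SOrientation G) (φ : E → ℤ)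
    (hnobal : ¬ ∃ C : Circuit G, C.Balanced ∧ (∀ i, C.ConsistentAt O.dir i) ∧
        ∀ i, φ (C.edge i) ≠ 0)
    (C : Circuit G) (hnz : ∀ i, φ (C.edge i) ≠ 0) (jj : Fin (C.n + 1))
    (hc : ∀ i, i ≠ jj → C.ConsistentAt O.dir i) :
    ∃ C : Circuit G, ¬ C.Balanced ∧ (∀ i, φ (C.edge i) ≠ 0) ∧
      ∃ j, ¬ C.ConsistentAt O.dir j ∧ ∀ i, i ≠ j → C.ConsistentAt O.dir i := by
  by_cases hj : C.ConsistentAt O.dir jj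
  · exfalso
    have hall : ∀ i, C.ConsistentAt O.dir i := fun i =>
      if h : i = jj then h ▸ hj else hc i h
    exact hnobal ⟨C, balanced_of_consistent O C hall, hall, hnz⟩
  · exact ⟨C, unbalanced_of_one_fault O C jj hj hc, hnz, jj, hj, hc⟩

end Main
/-- If a bidirected signed graph carries a nonzero integer flow that is
nonnegative on every edge and whose (nonempty) support contains no
consistently directed balanced circuit, then the support contains a
consistently directed unbalanced circuit: a circuit with an odd number of
negative edges, consistent at all vertices except exactly one faulty vertex. -/
theorem exists_consistent_unbalanced_circuit {V E : Type} [Fintype E]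
    [DecidableEq V] (G : SignedGraph V E) (O : SOrientation G) (φ : E → ℤ)
    (hφ : IsFlow O φ) (hpos : ∀ e, 0 ≤ φ e) (hne : ∃ e, φ e ≠ 0)
    (hnobal : ¬ ∃ C : Circuit G, C.Balanced ∧ (∀ i, C.ConsistentAt O.dir i) ∧
        ∀ i, φ (C.edge i) ≠ 0) :
    ∃ C : Circuit G, ¬ C.Balanced ∧ (∀ i, φ (C.edge i) ≠ 0) ∧
      ∃ j, ¬ C.ConsistentAt O.dir j ∧ ∀ i, i ≠ j → C.ConsistentAt O.dir i := by
  obtain ⟨e₀, he₀⟩ := hne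
  by_cases hl : G.ends e₀ false = G.ends e₀ true
  · -- `e₀` is a loop: close it into a one-edge circuit directly
    refine wrapup O φ hnobal
      ⟨0, fun _ => G.ends e₀ false, fun _ => e₀, fun _ => false,
        fun a b _ => Fin.ext (by have h1 := a.isLt; have h2 := b.isLt; omega),
        fun a b _ => Fin.ext (by have h1 := a.isLt; have h2 := b.isLt; omega),
        fun _ => rfl, fun _ => hl.symm⟩
      (fun _ => he₀) 0 (fun i hi => absurd (Fin.fin_one_eq_zero i) hi)
  · -- otherwise start from the one-edge path on `e₀` and grow
    have hP : ∃ P : GPath G, P.m = 1 ∧ P.ConsDir O.dir ∧ ∀ i, φ (P.edge i) ≠ 0 := by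
      refine ⟨⟨1, fun i => if (i : ℕ) = 0 then G.ends e₀ false else G.ends e₀ true,
        fun _ => e₀, fun _ => false, ?_,
        fun a b _ => Fin.ext (by have h1 := a.isLt; have h2 := b.isLt; omega),
        ?_, ?_⟩, rfl, ?_, fun _ => he₀⟩
      · intro a b hab
        dsimp only at hab
        have h1 := a.isLt
        have h2 := b.isLt
        split_ifs at hab with ha hb hb
        · exact Fin.ext (by omega)
        · exact absurd hab hl
        · exact absurd hab.symm hl
        · exact Fin.ext (by omega)
      · intro i
        have : (i : ℕ) = 0 := by have := i.isLt; omega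
        show G.ends e₀ false = if (i.castSucc : ℕ) = 0 then _ else _
        rw [if_pos (by simp [this])]
      · intro i
        have : (i : ℕ) = 0 := by have := i.isLt; omega
        show G.ends e₀ (!false) = if (i.succ : ℕ) = 0 then _ else _
        rw [if_neg (by simp [Fin.succ])]
        rfl
      · intro a b hab
        have h1 : (a : ℕ) < 1 := a.isLt
        have h2 : (b : ℕ) < 1 := b.isLt
        omega
    obtain ⟨P, hm, hPc, hPnz⟩ := hP
    obtain ⟨C, hnz, jj, hc⟩ :=
      grow O φ hφ hpos (Fintype.card E) P (by omega) hPc hPnz (by omega)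
    exact wrapup O φ hnobal C hnz jj hc
end
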